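/- arXiv:1709.05163 — 2 statements merged into one kernel-verified Lean document; each statement's English description precedes it below -/
import Mathlib

section
/- For every integer τ with 0 ≤ τ ≤ N − 1, the periodic cross-correlation of T^(1) and T^(2) satisfies R_{T^(1),T^(2)}(τ) = −R_{T^(1)}(τ + N/2). -/
/-- The geometric sequence of the first type: `t¹ₙ = 1` iff the Legendre symbol of
`Tr(ω^n)` is `-1`, and `0` otherwise (i.e. when the symbol is `0` or `1`). -/
noncomputable def ntuT1 (p : ℕ) [Fact p.Prime] {F : Type} [Field F]
    [Algebra (ZMod p) F] (ω : F) (n : ℕ) : ZMod 2 :=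
  if legendreSym p ((Algebra.trace (ZMod p) F (ω ^ n)).val : ℤ) = -1 then 1 else 0

/-- The geometric sequence of the second type: `t²ₙ = 0` iff the Legendre symbol of
`Tr(ω^n)` is `1`, and `1` otherwise (i.e. when the symbol is `0` or `-1`). -/
noncomputable def ntuT2 (p : ℕ) [Fact p.Prime] {F : Type} [Field F]
    [Algebra (ZMod p) F] (ω : F) (n : ℕ) : ZMod 2 :=
  if legendreSym p ((Algebra.trace (ZMod p) F (ω ^ n)).val : ℤ) = 1 then 0 else 1

/-- Periodic cross-correlation at shift `τ` of two `N`-periodic binary sequences: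
`R_{s,s'}(τ) = Σ_{i=0}^{N-1} (-1)^{s_i + s'_{i+τ}}`, indices taken modulo `N`. -/
def pcorr (N : ℕ) (s s' : ℕ → ZMod 2) (τ : ℤ) : ℤ :=
  ∑ i ∈ Finset.range N, (-1 : ℤ) ^ ((s i + s' ((((i : ℤ) + τ) % (N : ℤ)).toNat)).val)

/-- The interleaved sequence of `t` and the left shift by `e` of `u`:
`n = 2j ↦ t j`, `n = 2j+1 ↦ u (j + e)`. -/
def ntuInterleave (t u : ℕ → ZMod 2) (e : ℕ) (n : ℕ) : ZMod 2 :=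
  if n % 2 = 0 then t (n / 2) else u (n / 2 + e)

/-! The norm `ω ^ ((p ^ m - 1) / (p - 1))` of the primitive element `ω` lies in `𝔽_p` and generates
`𝔽_p^×`, so it is a quadratic non-residue. As the trace is `𝔽_p`-linear, multiplying by it flips
the quadratic character of `Tr(ω ^ n)`: the character sequence is antiperiodic with antiperiod
`N / 2`. Hence `T²` is the complement of `T¹` shifted by `N / 2`, and complementing one of two
sequences negates their correlation. -/

open Function

section Correlation

variable {N : ℕ} (s : ℕ → ZMod 2) {u : ℕ → ZMod 2} (τ : ℤ)

lemma ZMod.neg_one_pow_val_add_one_add (a b : ZMod 2) :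
    (-1 : ℤ) ^ (a + (1 + b)).val = -(-1) ^ (a + b).val := by
  rw [add_left_comm]
  generalize a + b = x
  fin_cases x <;> rfl

lemma pcorr_one_add : pcorr N s (fun n ↦ 1 + u n) τ = -pcorr N s u τ := by
  simp only [pcorr, ZMod.neg_one_pow_val_add_one_add, Finset.sum_neg_distrib]

lemma pcorr_add_shift (hu : Periodic u N) (k : ℕ) :
    pcorr N s (fun n ↦ u (n + k)) τ = pcorr N s u (τ + k) := by
  refine Finset.sum_congr rfl fun i hi ↦ ?_
  have hN : (N : ℤ) ≠ 0 := by have := Finset.mem_range.mp hi; omega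
  have hidx : (((i + τ) % N).toNat + k) % N = ((i + (τ + k)) % N).toNat := by
    apply Nat.cast_injective (R := ℤ)
    push_cast [Int.toNat_of_nonneg (Int.emod_nonneg _ hN)]
    rw [← add_assoc, Int.emod_add_emod]
  simp only [← hidx, hu.map_mod_nat]

end Correlation

lemma legendreSym_val (p : ℕ) [Fact p.Prime] (x : ZMod p) :
    legendreSym p (x.val : ℤ) = quadraticChar (ZMod p) x := by
  rw [legendreSym, Int.cast_natCast, ZMod.natCast_zmod_val]

lemma quadraticChar_eq_neg_one_of_orderOf {K : Type*} [Field K] [Fintype K] [DecidableEq K]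
    (hK : ringChar K ≠ 2) {a : K} (ha : orderOf a = Fintype.card K - 1) :
    quadraticChar K a = -1 := by
  have hodd := FiniteField.odd_card_of_char_ne_two hK
  have hpos : 0 < orderOf a := by have := Fintype.one_lt_card (α := K); omega
  have ha0 : a ≠ 0 := by rintro rfl; simp at hpos
  rw [quadraticChar_neg_one_iff_not_isSquare, FiniteField.isSquare_iff hK ha0]
  intro h
  have := Nat.le_of_dvd (by omega) (orderOf_dvd_of_pow_eq_one h)
  omega

section TraceSequences

variable (p : ℕ) [Fact p.Prime] {F : Type} [Field F] [Algebra (ZMod p) F]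

noncomputable def traceChar (ω : F) (n : ℕ) : ℤ :=
  quadraticChar (ZMod p) (Algebra.trace (ZMod p) F (ω ^ n))

variable {p}

lemma traceChar_antiperiodic {ω : F} {q : ℕ} {c : ZMod p}
    (hc : ω ^ q = algebraMap (ZMod p) F c) (hχ : quadraticChar (ZMod p) c = -1) :
    Antiperiodic (traceChar p ω) q := by
  intro n
  rw [traceChar, traceChar, pow_add, mul_comm, hc, ← Algebra.smul_def, map_smul, smul_eq_mul,
    map_mul, hχ, neg_one_mul]

lemma ntuT1_eq_comp_traceChar (ω : F) :
    ntuT1 p ω = (fun χ ↦ if χ = -1 then 1 else 0) ∘ traceChar p ω := by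
  ext n
  simp only [ntuT1, traceChar, legendreSym_val, comp_apply]
  congr

lemma ntuT1_periodic {ω : F} {q : ℕ} (h : Antiperiodic (traceChar p ω) q) :
    Periodic (ntuT1 p ω) (2 * q) := by
  rw [ntuT1_eq_comp_traceChar]
  exact h.periodic_two_mul.comp _

lemma ntuT2_eq_one_add_ntuT1 {ω : F} {q : ℕ} (h : Antiperiodic (traceChar p ω) q) (n : ℕ) :
    ntuT2 p ω n = 1 + ntuT1 p ω (n + q) := by
  have hn := h n
  simp only [ntuT1, ntuT2, legendreSym_val, traceChar] at hn ⊢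
  simp only [hn, neg_inj]
  generalize quadraticChar (ZMod p) _ = χ
  split_ifs <;> decide

end TraceSequences

lemma FiniteField.orderOf_norm_eq_card_sub_one {K L : Type*} [Field K] [Field L] [Fintype K]
    [Fintype L] [Algebra K L] {x : L} (hx : orderOf x = Fintype.card L - 1) :
    orderOf (Algebra.norm K x) = Fintype.card K - 1 := by
  have hdvd : Fintype.card K - 1 ∣ Fintype.card L - 1 := by
    simpa [Module.card_eq_pow_finrank (K := K) (V := L)] using
      Nat.sub_dvd_pow_sub_pow (Fintype.card K) 1 (Module.finrank K L)
  have hx0 : orderOf x ≠ 0 := by have := Fintype.one_lt_card (α := L); omega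
  rw [← orderOf_injective (algebraMap K L : K →* L) (algebraMap K L).injective,
    MonoidHom.coe_coe, FiniteField.algebraMap_norm_eq_pow, Nat.card_eq_fintype_card,
    Nat.card_eq_fintype_card, ← hx, orderOf_pow_orderOf_div hx0 (hx ▸ hdvd)]

lemma traceChar_antiperiodic_of_orderOf {p m : ℕ} [Fact p.Prime] (hp2 : p ≠ 2) {F : Type}
    [Field F] [Fintype F] [Algebra (ZMod p) F] (hcard : Fintype.card F = p ^ m) {ω : F}
    (hω : orderOf ω = p ^ m - 1) : Antiperiodic (traceChar p ω) ((p ^ m - 1) / (p - 1)) := by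
  apply traceChar_antiperiodic (c := Algebra.norm (ZMod p) ω)
  · rw [FiniteField.algebraMap_norm_eq_pow, Nat.card_eq_fintype_card, hcard, Nat.card_zmod]
  · apply quadraticChar_eq_neg_one_of_orderOf (by rwa [ZMod.ringChar_zmod_n])
    rw [FiniteField.orderOf_norm_eq_card_sub_one (hcard ▸ hω), ZMod.card]

theorem stmt3_general (p m : ℕ) [Fact p.Prime] (hp2 : p ≠ 2)
    (F : Type) [Field F] [Fintype F] [Algebra (ZMod p) F]
    (hcard : Fintype.card F = p ^ m) (ω : F) (hω : orderOf ω = p ^ m - 1)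
    (N : ℕ) (hN : N = 2 * (p ^ m - 1) / (p - 1)) (τ : ℤ) :
    pcorr N (ntuT1 p ω) (ntuT2 p ω) τ = - pcorr N (ntuT1 p ω) (ntuT1 p ω) (τ + ((N / 2 : ℕ) : ℤ)) := by
  have hanti := traceChar_antiperiodic_of_orderOf hp2 hcard hω
  set q := (p ^ m - 1) / (p - 1)
  have hNq : N = 2 * q := by
    rw [hN, Nat.mul_div_assoc 2 (by simpa using Nat.sub_dvd_pow_sub_pow p 1 m)]
  have hN2 : N / 2 = q := by omega
  rw [funext (ntuT2_eq_one_add_ntuT1 hanti), pcorr_one_add, hN2,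
    pcorr_add_shift _ _ (hNq ▸ ntuT1_periodic hanti)]

theorem stmt3 (p m : ℕ) [Fact p.Prime] (hp2 : p ≠ 2) (hm : 1 < m)
    (F : Type) [Field F] [Fintype F] [Algebra (ZMod p) F]
    (hcard : Fintype.card F = p ^ m) (ω : F) (hω : orderOf ω = p ^ m - 1)
    (N : ℕ) (hN : N = 2 * (p ^ m - 1) / (p - 1)) (τ : ℤ) (hτ0 : 0 ≤ τ) (hτ1 : τ ≤ (N : ℤ) - 1) :
    pcorr N (ntuT1 p ω) (ntuT2 p ω) τ = - pcorr N (ntuT1 p ω) (ntuT1 p ω) (τ + ((N / 2 : ℕ) : ℤ)) :=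
  stmt3_general p m hp2 F hcard ω hω N hN τ
end

section
/- Let e ∈ {0, 1, …, N−1} and suppose 2e ≡ 1 − N/2 (mod N). For every odd shift τ = 2τ0 + 1 with 0 ≤ τ0 ≤ N−1, the periodic autocorrelation of S^e satisfies: R_{S^e}(2τ0+1) = −N − N1 if τ0 ≡ −e or τ0 ≡ e − 1 (mod N); and R_{S^e}(2τ0+1) = −2N2 otherwise. -/
open Finset Function

namespace Function.Periodic

variable {α M : Type*} [AddCommMonoid M] {N : ℕ}

theorem sum_range_add {G : ℕ → M} (hG : Periodic G N) (k : ℕ) :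
    ∑ j ∈ range N, G (j + k) = ∑ j ∈ range N, G j := by
  induction k with
  | zero => rfl
  | succ k ih =>
    rw [← ih]
    rcases N with _ | n
    · simp
    · rw [sum_range_succ, sum_range_succ' (fun j ↦ G (j + k)), zero_add, ← hG k]
      congr 1
      · exact sum_congr rfl fun j _ ↦ by rw [add_right_comm, add_assoc]
      · congr 1; omega

theorem sum_range_mul {G : ℕ → M} (hG : Periodic G N) (k : ℕ) :
    ∑ j ∈ range (k * N), G j = k • ∑ j ∈ range N, G j := by
  induction k with
  | zero => simp
  | succ k ih =>
    rw [add_mul, one_mul, Finset.sum_range_add, ih, succ_nsmul]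
    congr 1
    exact sum_congr rfl fun j _ ↦ by rw [add_comm]; exact hG.nat_mul k j

theorem apply_eq_of_modEq {t : ℕ → α} (ht : Periodic t N) {a b : ℕ}
    (h : (a : ℤ) ≡ b [ZMOD N]) : t a = t b := by
  rw [← ht.map_mod_nat a, ← ht.map_mod_nat b, Int.natCast_modEq_iff.1 h]

end Function.Periodic

theorem Int.toNat_emod_modEq {N : ℤ} (hN : 0 < N) (k : ℤ) : ((k % N).toNat : ℤ) ≡ k [ZMOD N] := by
  rw [Int.toNat_of_nonneg (Int.emod_nonneg k hN.ne')]
  exact Int.mod_modEq k N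

theorem Int.dvd_toNat_emod_iff {m N : ℕ} (hN : 0 < N) (hm : m ∣ N) (k : ℤ) :
    m ∣ (k % N).toNat ↔ (m : ℤ) ∣ k := by
  rw [← Int.natCast_dvd_natCast, Int.toNat_of_nonneg (Int.emod_nonneg k (by omega)),
    Int.dvd_iff_emod_eq_zero, Int.emod_emod_of_dvd k (Int.natCast_dvd_natCast.2 hm),
    Int.dvd_iff_emod_eq_zero]

theorem neg_one_pow_val_add (a b : ZMod 2) :
    (-1 : ℤ) ^ (a + b).val = (-1) ^ a.val * (-1) ^ b.val := by
  revert a b; decide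

theorem Finset.sum_range_two_mul {M : Type*} [AddCommMonoid M] (h : ℕ → M) (n : ℕ) :
    ∑ i ∈ range (2 * n), h i = ∑ j ∈ range n, (h (2 * j) + h (2 * j + 1)) := by
  induction n with
  | zero => simp
  | succ n ih =>
    rw [mul_add, mul_one, sum_range_succ, sum_range_succ, sum_range_succ, ih, add_assoc]

theorem pcorr_eq_sum (N : ℕ) (s t : ℕ → ZMod 2) (τ : ℤ) :
    pcorr N s t τ = ∑ i ∈ range N, (-1) ^ (s i).val * (-1) ^ (t (((i + τ) % N).toNat)).val := by
  simp only [pcorr, neg_one_pow_val_add]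

section Interleave

variable (s t : ℕ → ZMod 2) (e : ℕ) {N : ℕ}

theorem ntuInterleave_two_mul (j : ℕ) : ntuInterleave s t e (2 * j) = s j := by
  simp [ntuInterleave]

theorem ntuInterleave_two_mul_add_one (j : ℕ) : ntuInterleave s t e (2 * j + 1) = t (j + e) := by
  simp [ntuInterleave, Nat.mul_add_div]

theorem ntuInterleave_toNat_emod_two_mul (k : ℤ) :
    ntuInterleave s t e ((2 * k) % (2 * N : ℕ)).toNat = s (k % N).toNat := by
  have hmod : (2 * k) % (2 * N : ℕ) = 2 * (k % N) := by
    push_cast; exact Int.mul_emod_mul_of_pos _ _ two_pos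
  rw [hmod, show (2 * (k % N)).toNat = 2 * (k % N).toNat by omega, ntuInterleave_two_mul]

theorem ntuInterleave_toNat_emod_two_mul_add_one (hN : 0 < N) (k : ℤ) :
    ntuInterleave s t e ((2 * k + 1) % (2 * N : ℕ)).toNat = t ((k % N).toNat + e) := by
  have hnonneg : 0 ≤ k % N := Int.emod_nonneg k (by omega)
  have hlt : k % N < N := Int.emod_lt_of_pos k (by omega)
  have hmod : (2 * k + 1) % (2 * N : ℕ) = 2 * (k % N) + 1 := by
    have hdiv : 2 * k + 1 = (2 * (k % N) + 1) + (2 * N : ℕ) * (k / N) := by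
      push_cast; linarith [Int.emod_add_mul_ediv k N]
    rw [hdiv, Int.add_mul_emod_self_left, Int.emod_eq_of_lt (by omega) (by push_cast; omega)]
  rw [hmod, show (2 * (k % N) + 1).toNat = 2 * (k % N).toNat + 1 by omega,
    ntuInterleave_two_mul_add_one]

end Interleave

theorem pcorr_ntuInterleave_two_mul_add_one {N : ℕ} {s t : ℕ → ZMod 2} (ht : Periodic t N)
    (e : ℕ) (τ₀ : ℤ) :
    pcorr (2 * N) (ntuInterleave s t e) (ntuInterleave s t e) (2 * τ₀ + 1) =
      pcorr N s t (τ₀ + e) + pcorr N t s (τ₀ + 1 - e) := by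
  rcases N.eq_zero_or_pos with rfl | hN
  · simp [pcorr]
  have hmodEq (k : ℤ) : ((k % N).toNat : ℤ) ≡ k [ZMOD N] := Int.toNat_emod_modEq (by omega) k
  rw [pcorr_eq_sum, sum_range_two_mul, sum_add_distrib, pcorr_eq_sum, pcorr_eq_sum]
  congr 1
  · refine sum_congr rfl fun j _ ↦ ?_
    rw [show ((2 * j : ℕ) : ℤ) + (2 * τ₀ + 1) = 2 * (j + τ₀) + 1 by push_cast; ring,
      ntuInterleave_toNat_emod_two_mul_add_one _ _ _ hN, ntuInterleave_two_mul,
      ht.apply_eq_of_modEq (b := ((j + (τ₀ + e)) % N).toNat)]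
    push_cast
    exact ((hmodEq _).add_right e).trans (by rw [add_assoc]; exact (hmodEq _).symm)
  · set G : ℕ → ℤ := fun j ↦ (-1) ^ (t j).val * (-1) ^ (s ((j + (τ₀ + 1 - e)) % N).toNat).val
    have hG : Periodic G N := fun j ↦ by
      simp only [G, ht j]
      rw [Nat.cast_add, add_right_comm, Int.add_emod_right]
    rw [← hG.sum_range_add e]
    refine sum_congr rfl fun j _ ↦ ?_
    rw [show ((2 * j + 1 : ℕ) : ℤ) + (2 * τ₀ + 1) = 2 * (j + τ₀ + 1) by push_cast; ring,
      ntuInterleave_toNat_emod_two_mul, ntuInterleave_two_mul_add_one]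
    simp only [G]
    push_cast
    ring_nf

theorem AddMonoidHom.card_nsmul_sum_comp_of_surjective {V W M : Type*} [AddCommGroup V]
    [Fintype V] [AddCommGroup W] [Fintype W] [AddCommMonoid M] (L : V →+ W)
    (hL : Surjective L) (h : W → M) :
    Fintype.card W • ∑ x, h (L x) = Fintype.card V • ∑ y, h y := by
  classical
  set c := #{x | L x = 0}
  have hfiber (y : W) : #{x | L x = y} = c :=
    AddMonoidHom.card_fiber_eq_of_mem_range L (hL y) (hL 0)
  have hsum : ∑ x, h (L x) = c • ∑ y, h y := by
    rw [sum_comp, image_univ_of_surjective hL, smul_sum]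
    simp only [hfiber]
  have hcard : Fintype.card V = Fintype.card W * c := by
    rw [← card_univ, card_eq_sum_card_fiberwise (t := univ) (fun x _ ↦ mem_univ (L x))]
    simp [hfiber]
  rw [hsum, hcard, smul_smul, mul_comm]

section Trace

variable (K : Type*) {F : Type*} [Field K] [Field F] [Algebra K F]

theorem trace_algebraMap_mul (u : K) (x : F) :
    Algebra.trace K F (algebraMap K F u * x) = u * Algebra.trace K F x := by
  rw [← Algebra.smul_def, map_smul, smul_eq_mul]

variable [Fintype K] [Fintype F]

theorem trace_prod_trace_mul_surjective {c : F} (hc : c ∉ Set.range (algebraMap K F)) :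
    Surjective ((Algebra.trace K F).prod ((Algebra.trace K F).comp (LinearMap.mulLeft K c))) := by
  set L := (Algebra.trace K F).prod ((Algebra.trace K F).comp (LinearMap.mulLeft K c))
  by_contra hL
  obtain ⟨f, hf, hker⟩ := Submodule.exists_le_ker_of_lt_top (LinearMap.range L)
    (lt_top_iff_ne_top.2 fun h ↦ hL (LinearMap.range_eq_top.1 h))
  have hf_apply (a b : K) : f (a, b) = a * f (1, 0) + b * f (0, 1) := by
    rw [← smul_eq_mul, ← smul_eq_mul, ← map_smul, ← map_smul, ← map_add]
    simp
  have hzero : algebraMap K F (f (1, 0)) + algebraMap K F (f (0, 1)) * c = 0 := by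
    refine (traceForm_nondegenerate K F).1 _ fun x ↦ ?_
    have hx := hker (LinearMap.mem_range_self L x)
    rw [LinearMap.mem_ker] at hx
    simp only [L, LinearMap.prod_apply, Function.prod, LinearMap.comp_apply,
      LinearMap.mulLeft_apply] at hx
    rw [hf_apply] at hx
    rw [Algebra.traceForm_apply, add_mul, mul_assoc, map_add, trace_algebraMap_mul,
      trace_algebraMap_mul]
    linear_combination hx
  by_cases hβ : f (0, 1) = 0
  · apply hf
    rw [hβ, map_zero, zero_mul, add_zero, map_eq_zero_iff _ (algebraMap K F).injective] at hzero
    refine LinearMap.ext fun ⟨a, b⟩ ↦ ?_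
    rw [hf_apply, hβ, hzero]
    simp
  · apply hc
    refine ⟨-f (1, 0) / f (0, 1), ?_⟩
    rw [map_div₀, map_neg, eq_neg_of_add_eq_zero_left hzero]
    field_simp [(map_ne_zero (algebraMap K F)).2 hβ]

variable (Φ Ψ : K → ℤ)

local notation "Tr" => Algebra.trace K F

theorem card_mul_sum_trace_algebraMap_mul (u : K) :
    Fintype.card K * ∑ x : F, Φ (Tr x) * Ψ (Tr (algebraMap K F u * x)) =
      Fintype.card F * ∑ a, Φ a * Ψ (u * a) := by
  simp only [trace_algebraMap_mul]
  exact_mod_cast (Algebra.trace K F).toAddMonoidHom.card_nsmul_sum_comp_of_surjective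
    (Algebra.trace_surjective K F) fun a ↦ Φ a * Ψ (u * a)

theorem card_sq_mul_sum_trace_mul {c : F} (hc : c ∉ Set.range (algebraMap K F)) :
    Fintype.card K ^ 2 * ∑ x : F, Φ (Tr x) * Ψ (Tr (c * x)) =
      Fintype.card F * ((∑ a, Φ a) * ∑ a, Ψ a) := by
  have h := ((Algebra.trace K F).prod ((Algebra.trace K F).comp
    (LinearMap.mulLeft K c))).toAddMonoidHom.card_nsmul_sum_comp_of_surjective
    (trace_prod_trace_mul_surjective K hc) fun y : K × K ↦ Φ y.1 * Ψ y.2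
  rw [Fintype.sum_mul_sum, ← Fintype.sum_prod_type']
  simpa [sq] using h

end Trace

section Generator

variable {F : Type*} [Field F] [Fintype F] {ω : F}

theorem ne_zero_of_orderOf_eq_card_sub_one (hω : orderOf ω = Fintype.card F - 1) : ω ≠ 0 := by
  rintro rfl
  have := Fintype.one_lt_card (α := F)
  rw [orderOf_zero] at hω
  omega

theorem injOn_pow_range_card_sub_one (hω : orderOf ω = Fintype.card F - 1) :
    Set.InjOn (ω ^ ·) (range (Fintype.card F - 1) : Set ℕ) := by
  rw [coe_range, ← hω]
  exact pow_injOn_Iio_orderOf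

theorem image_pow_range_card_sub_one [DecidableEq F] (hω : orderOf ω = Fintype.card F - 1) :
    (range (Fintype.card F - 1)).image (ω ^ ·) = univ.erase 0 := by
  refine eq_of_subset_of_card_le (fun x hx ↦ ?_) ?_
  · obtain ⟨k, -, rfl⟩ := mem_image.1 hx
    exact mem_erase.2 ⟨pow_ne_zero _ (ne_zero_of_orderOf_eq_card_sub_one hω), mem_univ _⟩
  · rw [card_image_of_injOn (injOn_pow_range_card_sub_one hω), card_erase_of_mem (mem_univ _),
      card_range, card_univ]

theorem exists_pow_eq_of_orderOf_eq_card_sub_one (hω : orderOf ω = Fintype.card F - 1) {x : F}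
    (hx : x ≠ 0) : ∃ k, ω ^ k = x := by
  classical
  have hx' : x ∈ (range (Fintype.card F - 1)).image (ω ^ ·) := by
    rw [image_pow_range_card_sub_one hω]
    exact mem_erase.2 ⟨hx, mem_univ x⟩
  obtain ⟨k, -, hk⟩ := mem_image.1 hx'
  exact ⟨k, hk⟩

theorem nsmul_sum_range_pow_of_invariant {M : Type*} [AddCommGroup M]
    (hω : orderOf ω = Fintype.card F - 1) {k N : ℕ} (hkN : k * N = Fintype.card F - 1)
    (Φ : F → M) (hΦ : ∀ x, Φ (ω ^ N * x) = Φ x) :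
    k • ∑ j ∈ range N, Φ (ω ^ j) = ∑ x, Φ x - Φ 0 := by
  classical
  have hper : Periodic (fun j ↦ Φ (ω ^ j)) N := fun j ↦ by
    simp only [pow_add, mul_comm _ (ω ^ N), hΦ]
  rw [← hper.sum_range_mul, hkN, ← sum_erase_eq_sub (mem_univ 0),
    ← image_pow_range_card_sub_one hω, sum_image (injOn_pow_range_card_sub_one hω)]

end Generator

section Norm

variable (K : Type*) {F : Type*} [Field K] [Fintype K] [Field F] [Fintype F] [Algebra K F]
  {ω : F} (hω : orderOf ω = Fintype.card F - 1) {σ : ℕ}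
  (hσ : (Fintype.card K - 1) * σ = Fintype.card F - 1)

include hσ in
theorem algebraMap_norm_eq_pow_of_mul_eq : algebraMap K F (Algebra.norm K ω) = ω ^ σ := by
  have := Fintype.one_lt_card (α := K)
  rw [FiniteField.algebraMap_norm_eq_pow, Nat.card_eq_fintype_card, Nat.card_eq_fintype_card, ← hσ,
    Nat.mul_div_cancel_left _ (by omega)]

include hσ in
theorem trace_pow_two_mul_mul (x : F) :
    Algebra.trace K F (ω ^ (2 * σ) * x) = Algebra.norm K ω ^ 2 * Algebra.trace K F x := by
  rw [mul_comm 2 σ, pow_mul, ← algebraMap_norm_eq_pow_of_mul_eq K hσ, ← map_pow,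
    trace_algebraMap_mul]

include hω in
theorem quadraticChar_norm_eq_neg_one [DecidableEq K] (hK : ringChar K ≠ 2) :
    quadraticChar K (Algebra.norm K ω) = -1 := by
  have hnorm : Algebra.norm K ω ≠ 0 :=
    Algebra.norm_ne_zero_iff.2 (ne_zero_of_orderOf_eq_card_sub_one hω)
  refine (quadraticChar_dichotomy hnorm).resolve_left fun hsq ↦ ?_
  obtain ⟨a, ha⟩ := quadraticChar_exists_neg_one hK
  obtain ⟨x, rfl⟩ := FiniteField.norm_surjective K F a
  have hx : x ≠ 0 := by rintro rfl; simp at ha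
  obtain ⟨k, rfl⟩ := exists_pow_eq_of_orderOf_eq_card_sub_one hω hx
  rw [map_pow, map_pow, hsq, one_pow] at ha
  norm_num at ha

include hω hσ in
theorem pow_notMem_range_algebraMap {d : ℕ} (hd : ¬σ ∣ d) :
    ω ^ d ∉ Set.range (algebraMap K F) := by
  rintro ⟨u, hu⟩
  have hu0 : u ≠ 0 := by
    rintro rfl
    exact pow_ne_zero d (ne_zero_of_orderOf_eq_card_sub_one hω) (by simpa using hu.symm)
  have hpow : ω ^ (d * (Fintype.card K - 1)) = 1 := by
    rw [pow_mul, ← hu, ← map_pow, FiniteField.pow_card_sub_one_eq_one u hu0, map_one]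
  have hdvd := orderOf_dvd_of_pow_eq_one hpow
  rw [hω, ← hσ, mul_comm] at hdvd
  have := Fintype.one_lt_card (α := K)
  exact hd (Nat.dvd_of_mul_dvd_mul_right (by omega) hdvd)

end Norm

section QuadraticCharWithZero

variable {K : Type*} [Field K] [Fintype K] [DecidableEq K]

def quadraticCharWithZero (c : ℤ) (a : K) : ℤ :=
  if a = 0 then c else quadraticChar K a

variable (c c' : ℤ)

@[simp]
theorem quadraticCharWithZero_zero : quadraticCharWithZero c (0 : K) = c := if_pos rfl

theorem quadraticCharWithZero_of_ne_zero {a : K} (ha : a ≠ 0) :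
    quadraticCharWithZero c a = quadraticChar K a := if_neg ha

theorem quadraticCharWithZero_mul_of_quadraticChar_eq_one {v : K} (hv : quadraticChar K v = 1)
    (a : K) : quadraticCharWithZero c (v * a) = quadraticCharWithZero c a := by
  have hv0 : v ≠ 0 := by rintro rfl; simp at hv
  rcases eq_or_ne a 0 with rfl | ha
  · simp
  · rw [quadraticCharWithZero_of_ne_zero c ha,
      quadraticCharWithZero_of_ne_zero c (mul_ne_zero hv0 ha), map_mul, hv, one_mul]

theorem sum_quadraticCharWithZero (hK : ringChar K ≠ 2) :
    ∑ a : K, quadraticCharWithZero c a = c := by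
  have hsplit (a : K) : quadraticCharWithZero c a = quadraticChar K a + if a = 0 then c else 0 := by
    rcases eq_or_ne a 0 with rfl | ha
    · simp
    · simp [quadraticCharWithZero_of_ne_zero c ha, ha]
  rw [sum_congr rfl fun a _ ↦ hsplit a, sum_add_distrib, quadraticChar_sum_zero hK]
  simp

theorem sum_quadraticCharWithZero_mul {u : K} (hu : u ≠ 0) :
    ∑ a : K, quadraticCharWithZero c a * quadraticCharWithZero c' (u * a) =
      c * c' + (Fintype.card K - 1) * quadraticChar K u := by
  rw [← add_sum_erase _ _ (mem_univ 0), mul_zero, quadraticCharWithZero_zero,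
    quadraticCharWithZero_zero]
  have hterm : ∀ a ∈ univ.erase (0 : K),
      quadraticCharWithZero c a * quadraticCharWithZero c' (u * a) = quadraticChar K u := by
    intro a ha
    have ha0 := ne_of_mem_erase ha
    rw [quadraticCharWithZero_of_ne_zero c ha0, quadraticCharWithZero_of_ne_zero c'
      (mul_ne_zero hu ha0), map_mul, mul_left_comm, ← sq, quadraticChar_sq_one ha0, mul_one]
  rw [sum_congr rfl hterm, sum_const, card_erase_of_mem (mem_univ _), card_univ, nsmul_eq_mul,
    Nat.cast_sub Fintype.card_pos, Nat.cast_one]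

end QuadraticCharWithZero

section TraceCorrelation

variable {K F : Type*} [Field K] [Fintype K] [DecidableEq K] [Field F] [Fintype F] [Algebra K F]
  (hK : ringChar K ≠ 2) {ω : F} (hω : orderOf ω = Fintype.card F - 1) {σ : ℕ}
  (hσ : (Fintype.card K - 1) * σ = Fintype.card F - 1) (c c' : ℤ)

local notation "Tr" => Algebra.trace K F

variable (K) in
noncomputable def traceCorrelation (y : F) : ℤ :=
  ∑ x : F, quadraticCharWithZero c (Tr x) * quadraticCharWithZero c' (Tr (y * x))

include hK hω hσ in
theorem sub_one_mul_sum_range_eq_traceCorrelation (d : ℕ) :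
    ((Fintype.card K : ℤ) - 1) * ∑ j ∈ range (2 * σ),
        quadraticCharWithZero c (Tr (ω ^ j)) * quadraticCharWithZero c' (Tr (ω ^ (j + d))) =
      2 * (traceCorrelation K c c' (ω ^ d) - c * c') := by
  obtain ⟨k, hk⟩ : ∃ k, Fintype.card K - 1 = 2 * k :=
    ⟨Fintype.card K / 2, by have := FiniteField.odd_card_of_char_ne_two hK; omega⟩
  have hkσ : k * (2 * σ) = Fintype.card F - 1 := by rw [← hσ, hk]; ring
  have hcardK : ((Fintype.card K : ℤ) - 1) = 2 * k := by
    rw [← Nat.cast_one, ← Nat.cast_sub Fintype.card_pos, hk]; push_cast; ring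
  have hsq : quadraticChar K (Algebra.norm K ω ^ 2) = 1 := by
    rw [map_pow, quadraticChar_norm_eq_neg_one K hω hK]; norm_num
  have hsum := nsmul_sum_range_pow_of_invariant hω hkσ
    (fun x ↦ quadraticCharWithZero c (Tr x) * quadraticCharWithZero c' (Tr (ω ^ d * x)))
    fun x ↦ by
      rw [mul_left_comm, trace_pow_two_mul_mul K hσ, trace_pow_two_mul_mul K hσ,
        quadraticCharWithZero_mul_of_quadraticChar_eq_one _ hsq,
        quadraticCharWithZero_mul_of_quadraticChar_eq_one _ hsq]
  simp only [mul_zero, map_zero, quadraticCharWithZero_zero, ← pow_add, add_comm d] at hsum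
  rw [hcardK, mul_assoc, ← nsmul_eq_mul, hsum, traceCorrelation]

include hK hω hσ in
theorem card_mul_traceCorrelation_pow_mul (k : ℕ) :
    Fintype.card K * traceCorrelation K c c' (ω ^ (σ * k)) =
      Fintype.card F * (c * c' + (Fintype.card K - 1) * (-1) ^ k) := by
  have hnorm : Algebra.norm K ω ≠ 0 :=
    Algebra.norm_ne_zero_iff.2 (ne_zero_of_orderOf_eq_card_sub_one hω)
  rw [traceCorrelation, pow_mul, ← algebraMap_norm_eq_pow_of_mul_eq K hσ, ← map_pow,
    card_mul_sum_trace_algebraMap_mul, sum_quadraticCharWithZero_mul _ _ (pow_ne_zero _ hnorm),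
    map_pow, quadraticChar_norm_eq_neg_one K hω hK]

include hK hω hσ in
theorem card_sq_mul_traceCorrelation_of_not_dvd {d : ℕ} (hd : ¬σ ∣ d) :
    Fintype.card K ^ 2 * traceCorrelation K c c' (ω ^ d) = Fintype.card F * (c * c') := by
  rw [traceCorrelation, card_sq_mul_sum_trace_mul K _ _ (pow_notMem_range_algebraMap K hω hσ hd),
    sum_quadraticCharWithZero _ hK, sum_quadraticCharWithZero _ hK]

end TraceCorrelation

section GeometricSequences

variable {p : ℕ} [Fact p.Prime] {F : Type} [Field F] [Algebra (ZMod p) F]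

local notation "Tr" => Algebra.trace (ZMod p) F

theorem legendreSym_natCast_val (a : ZMod p) :
    legendreSym p (a.val : ℤ) = quadraticChar (ZMod p) a := by
  rw [legendreSym, Int.cast_natCast, ZMod.natCast_zmod_val]

theorem neg_one_pow_val_ntuT1 (ω : F) (n : ℕ) :
    (-1 : ℤ) ^ (ntuT1 p ω n).val = quadraticCharWithZero 1 (Tr (ω ^ n)) := by
  rw [ntuT1, legendreSym_natCast_val]
  rcases eq_or_ne (Tr (ω ^ n)) 0 with h0 | h0
  · simp [h0]
  · rw [quadraticCharWithZero_of_ne_zero _ h0]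
    rcases quadraticChar_dichotomy h0 with h | h <;> simp [h, ZMod.val_one]

theorem neg_one_pow_val_ntuT2 (ω : F) (n : ℕ) :
    (-1 : ℤ) ^ (ntuT2 p ω n).val = quadraticCharWithZero (-1) (Tr (ω ^ n)) := by
  rw [ntuT2, legendreSym_natCast_val]
  rcases eq_or_ne (Tr (ω ^ n)) 0 with h0 | h0
  · simp [h0, ZMod.val_one]
  · rw [quadraticCharWithZero_of_ne_zero _ h0]
    rcases quadraticChar_dichotomy h0 with h | h <;> simp [h, ZMod.val_one]

variable [Fintype F] {ω : F} (hω : orderOf ω = Fintype.card F - 1) {σ : ℕ}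
  (hσ : (p - 1) * σ = Fintype.card F - 1)

include hω hσ in
theorem quadraticChar_trace_pow_add_two_mul (n : ℕ) :
    quadraticChar (ZMod p) (Tr (ω ^ (n + 2 * σ))) = quadraticChar (ZMod p) (Tr (ω ^ n)) := by
  have hnorm : Algebra.norm (ZMod p) ω ≠ 0 :=
    Algebra.norm_ne_zero_iff.2 (ne_zero_of_orderOf_eq_card_sub_one hω)
  rw [pow_add, mul_comm, trace_pow_two_mul_mul (ZMod p) (by rwa [ZMod.card]), map_mul,
    quadraticChar_sq_one' hnorm, one_mul]

include hω hσ in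
theorem periodic_ntuT1 : Periodic (ntuT1 p ω) (2 * σ) := fun n ↦ by
  simp only [ntuT1, legendreSym_natCast_val, quadraticChar_trace_pow_add_two_mul hω hσ]

include hω hσ in
theorem periodic_ntuT2 : Periodic (ntuT2 p ω) (2 * σ) := fun n ↦ by
  simp only [ntuT2, legendreSym_natCast_val, quadraticChar_trace_pow_add_two_mul hω hσ]

end GeometricSequences

theorem ite_dvd_add_ite_dvd {α : Type*} [AddCommMonoid α] {σ a b : ℤ} (hσ : σ ≠ 0)
    (hab : b ≡ a + σ [ZMOD 2 * σ]) (A B C : α) :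
    ((if 2 * σ ∣ a then A else if σ ∣ a then B else C) +
      if 2 * σ ∣ b then A else if σ ∣ b then B else C) =
      if 2 * σ ∣ a ∨ 2 * σ ∣ b then A + B else C + C := by
  have hodd {a b : ℤ} (hab : b ≡ a + σ [ZMOD 2 * σ]) (ha : 2 * σ ∣ a) :
      σ ∣ b ∧ ¬2 * σ ∣ b := by
    obtain ⟨i, hi⟩ := ha
    obtain ⟨j, hj⟩ := hab.dvd
    refine ⟨⟨2 * i + 1 - 2 * j, by linear_combination -hj + hi⟩, fun ⟨l, hl⟩ ↦ ?_⟩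
    have : σ * (2 * i + 1 - 2 * j) = σ * (2 * l) := by linear_combination hj - hi + hl
    have := mul_left_cancel₀ hσ this
    omega
  have heven {a b : ℤ} (hab : b ≡ a + σ [ZMOD 2 * σ]) (ha : σ ∣ a) :
      2 * σ ∣ a ∨ 2 * σ ∣ b := by
    obtain ⟨i, rfl⟩ := ha
    obtain ⟨j, hj⟩ := hab.dvd
    rcases Int.even_or_odd' i with ⟨r, rfl | rfl⟩
    · exact Or.inl ⟨r, by ring⟩
    · exact Or.inr ⟨r + 1 - j, by linear_combination -hj⟩
  have hba : a ≡ b + σ [ZMOD 2 * σ] := by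
    obtain ⟨j, hj⟩ := hab.dvd
    exact Int.modEq_iff_dvd.2 ⟨1 - j, by linear_combination -hj⟩
  by_cases ha : 2 * σ ∣ a
  · obtain ⟨hb, hb'⟩ := hodd hab ha
    simp [ha, hb, hb']
  by_cases hb : 2 * σ ∣ b
  · obtain ⟨ha', -⟩ := hodd hba hb
    simp [ha, hb, ha', add_comm]
  have ha' : ¬σ ∣ a := fun h ↦ (heven hab h).elim ha hb
  have hb' : ¬σ ∣ b := fun h ↦ (heven hba h).elim hb ha
  simp [ha, hb, ha', hb']

theorem sub_one_mul_two_mul_ediv_sub_one (x : ℤ) (k : ℕ) :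
    (x - 1) * (2 * (x ^ k - 1) / (x - 1)) = 2 * (x ^ k - 1) :=
  Int.mul_ediv_cancel' (dvd_mul_of_dvd_right (sub_one_dvd_pow_sub_one x k) 2)

section Correlation

variable {p m : ℕ} [Fact p.Prime] (hp2 : p ≠ 2) (hm : 1 < m) {F : Type} [Field F] [Fintype F]
  [Algebra (ZMod p) F] (hcard : Fintype.card F = p ^ m) {ω : F} (hω : orderOf ω = p ^ m - 1)
  {σ : ℕ} (hσ : (p - 1) * σ = p ^ m - 1) {c c' : ℤ} (hcc' : c * c' = -1)

local notation "Tr" => Algebra.trace (ZMod p) F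

include hm hσ in
theorem pos_of_sub_one_mul_eq : 0 < σ := by
  have := Nat.one_lt_pow (by omega : m ≠ 0) (Fact.out : p.Prime).one_lt
  exact Nat.pos_of_ne_zero fun h ↦ by rw [h, mul_zero] at hσ; omega

include hp2 hm hcard hω hσ hcc' in
theorem sub_one_mul_sum_range_trace_eq_ite (d : ℕ) :
    ((p : ℤ) - 1) * ∑ j ∈ range (2 * σ),
        quadraticCharWithZero c (Tr (ω ^ j)) * quadraticCharWithZero c' (Tr (ω ^ (j + d))) =
      if 2 * σ ∣ d then 2 * (p : ℤ) ^ m - 4 * p ^ (m - 1) + 2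
      else if σ ∣ d then 2 - 2 * (p : ℤ) ^ m else 2 - 2 * (p : ℤ) ^ (m - 2) := by
  have hK : ringChar (ZMod p) ≠ 2 := by rwa [ZMod.ringChar_zmod_n]
  have hω' : orderOf ω = Fintype.card F - 1 := by rw [hcard, hω]
  have hσ' : (Fintype.card (ZMod p) - 1) * σ = Fintype.card F - 1 := by rw [ZMod.card, hcard, hσ]
  have hsum := sub_one_mul_sum_range_eq_traceCorrelation hK hω' hσ' c c' d
  rw [ZMod.card] at hsum
  rw [hsum, hcc']
  have hp0 : (p : ℤ) ≠ 0 := by exact_mod_cast (Fact.out : p.Prime).ne_zero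
  have hpm1 : (p : ℤ) ^ m = p * p ^ (m - 1) := by rw [← pow_succ']; congr 1; omega
  have hpm2 : (p : ℤ) ^ m = p ^ 2 * p ^ (m - 2) := by rw [← pow_add]; congr 1; omega
  split_ifs with h2σ hσd
  · obtain ⟨k, rfl⟩ := h2σ
    have hS := card_mul_traceCorrelation_pow_mul hK hω' hσ' c c' (2 * k)
    rw [← mul_assoc, mul_comm σ 2] at hS
    simp only [ZMod.card, hcard, hcc', (even_two_mul k).neg_one_pow, Nat.cast_pow] at hS
    apply mul_left_cancel₀ hp0
    linear_combination 2 * hS - 4 * hpm1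
  · obtain ⟨k, rfl⟩ := hσd
    have hk : Odd k := Nat.not_even_iff_odd.1 fun ⟨r, hr⟩ ↦ h2σ ⟨r, by rw [hr]; ring⟩
    have hS := card_mul_traceCorrelation_pow_mul hK hω' hσ' c c' k
    simp only [ZMod.card, hcard, hcc', hk.neg_one_pow, Nat.cast_pow] at hS
    apply mul_left_cancel₀ hp0
    linear_combination 2 * hS
  · have hS := card_sq_mul_traceCorrelation_of_not_dvd hK hω' hσ' c c' hσd
    simp only [ZMod.card, hcard, hcc', Nat.cast_pow] at hS
    apply mul_left_cancel₀ (pow_ne_zero 2 hp0)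
    linear_combination 2 * hS - 2 * hpm2

include hp2 hm hcard hω hσ hcc' in
theorem sub_one_mul_pcorr_eq_ite {s t : ℕ → ZMod 2}
    (hs : ∀ n, (-1 : ℤ) ^ (s n).val = quadraticCharWithZero c (Tr (ω ^ n)))
    (ht : ∀ n, (-1 : ℤ) ^ (t n).val = quadraticCharWithZero c' (Tr (ω ^ n)))
    (ht_periodic : Periodic t (2 * σ)) (τ : ℤ) :
    ((p : ℤ) - 1) * pcorr (2 * σ) s t τ =
      if ((2 * σ : ℕ) : ℤ) ∣ τ then 2 * (p : ℤ) ^ m - 4 * p ^ (m - 1) + 2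
      else if (σ : ℤ) ∣ τ then 2 - 2 * (p : ℤ) ^ m else 2 - 2 * (p : ℤ) ^ (m - 2) := by
  have hN : 0 < 2 * σ := by have := pos_of_sub_one_mul_eq hm hσ; omega
  simp only [← Int.dvd_toNat_emod_iff hN dvd_rfl τ,
    ← Int.dvd_toNat_emod_iff hN (dvd_mul_left σ 2) τ]
  rw [← sub_one_mul_sum_range_trace_eq_ite hp2 hm hcard hω hσ hcc', pcorr_eq_sum]
  congr 1
  refine sum_congr rfl fun i _ ↦ ?_
  rw [ht_periodic.apply_eq_of_modEq (b := i + (τ % ((2 * σ : ℕ) : ℤ)).toNat), hs, ht]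
  push_cast
  exact (Int.toNat_emod_modEq (by omega) _).trans
    ((Int.toNat_emod_modEq (by omega) τ).add_left i).symm

include hp2 hm hcard hω hσ in
theorem sub_one_mul_pcorr_ntuInterleave_eq_ite {e : ℕ}
    (he : 2 * (e : ℤ) ≡ 1 - σ [ZMOD ((2 * σ : ℕ) : ℤ)]) (τ₀ : ℤ) :
    ((p : ℤ) - 1) * pcorr (2 * (2 * σ)) (ntuInterleave (ntuT1 p ω) (ntuT2 p ω) e)
        (ntuInterleave (ntuT1 p ω) (ntuT2 p ω) e) (2 * τ₀ + 1) =
      if τ₀ ≡ -(e : ℤ) [ZMOD ((2 * σ : ℕ) : ℤ)] ∨ τ₀ ≡ (e : ℤ) - 1 [ZMOD ((2 * σ : ℕ) : ℤ)] then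
        2 * (p : ℤ) ^ m - 4 * p ^ (m - 1) + 2 + (2 - 2 * (p : ℤ) ^ m)
      else 2 - 2 * (p : ℤ) ^ (m - 2) + (2 - 2 * (p : ℤ) ^ (m - 2)) := by
  have hω' : orderOf ω = Fintype.card F - 1 := by rw [hcard, hω]
  have hσ' : (p - 1) * σ = Fintype.card F - 1 := by rw [hcard, hσ]
  have hσ0 : (σ : ℤ) ≠ 0 := by have := pos_of_sub_one_mul_eq hm hσ; positivity
  have hshift : τ₀ + 1 - e ≡ τ₀ + e + σ [ZMOD 2 * σ] := by
    obtain ⟨k, hk⟩ := he.dvd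
    exact Int.modEq_iff_dvd.2 ⟨-k, by push_cast at hk; linear_combination -hk⟩
  have hleft : τ₀ ≡ -(e : ℤ) [ZMOD 2 * σ] ↔ 2 * (σ : ℤ) ∣ τ₀ + e := by
    rw [Int.modEq_iff_dvd, ← dvd_neg]; ring_nf
  have hright : τ₀ ≡ (e : ℤ) - 1 [ZMOD 2 * σ] ↔ 2 * (σ : ℤ) ∣ τ₀ + 1 - e := by
    rw [Int.modEq_iff_dvd, ← dvd_neg]; ring_nf
  rw [pcorr_ntuInterleave_two_mul_add_one (periodic_ntuT2 hω' hσ'), mul_add,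
    sub_one_mul_pcorr_eq_ite hp2 hm hcard hω hσ (mul_neg_one 1) (neg_one_pow_val_ntuT1 ω)
      (neg_one_pow_val_ntuT2 ω) (periodic_ntuT2 hω' hσ'),
    sub_one_mul_pcorr_eq_ite hp2 hm hcard hω hσ (neg_one_mul 1) (neg_one_pow_val_ntuT2 ω)
      (neg_one_pow_val_ntuT1 ω) (periodic_ntuT1 hω' hσ')]
  push_cast
  rw [ite_dvd_add_ite_dvd hσ0 hshift]
  simp only [hleft, hright]

end Correlation

theorem stmt8_general (p m : ℕ) [Fact p.Prime] (hp2 : p ≠ 2) (hm : 1 < m)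
    (F : Type) [Field F] [Fintype F] [Algebra (ZMod p) F]
    (hcard : Fintype.card F = p ^ m) (ω : F) (hω : orderOf ω = p ^ m - 1)
    (N : ℕ) (hN : N = 2 * (p ^ m - 1) / (p - 1)) (N1 N2 : ℤ)
    (hN1 : N1 = -2 * (p : ℤ) ^ (m - 1) + 2 * ((p : ℤ) ^ (m - 1) - 1) / ((p : ℤ) - 1))
    (hN2 : N2 = 2 * ((p : ℤ) ^ (m - 2) - 1) / ((p : ℤ) - 1))
    (e : ℕ) (hcond : 2 * (e : ℤ) ≡ 1 - ((N / 2 : ℕ) : ℤ) [ZMOD (N : ℤ)])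
    (τ0 : ℤ) :
    pcorr (2 * N) (ntuInterleave (ntuT1 p ω) (ntuT2 p ω) e) (ntuInterleave (ntuT1 p ω) (ntuT2 p ω) e) (2 * τ0 + 1) =
      if τ0 ≡ -(e : ℤ) [ZMOD (N : ℤ)] ∨ τ0 ≡ (e : ℤ) - 1 [ZMOD (N : ℤ)] then
        -(N : ℤ) - N1
      else -2 * N2 := by
  have hp1 : 1 < p := (Fact.out : p.Prime).one_lt
  obtain ⟨σ, hσ⟩ : ∃ σ, (p - 1) * σ = p ^ m - 1 := by
    obtain ⟨σ, hσ⟩ := Nat.sub_dvd_pow_sub_pow p 1 m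
    exact ⟨σ, by rw [← hσ, one_pow]⟩
  obtain rfl : N = 2 * σ := by rw [hN, ← hσ, mul_left_comm, Nat.mul_div_cancel_left _ (by omega)]
  rw [Nat.mul_div_cancel_left σ two_pos] at hcond
  have hσz : ((p : ℤ) - 1) * σ = (p : ℤ) ^ m - 1 := by
    have := Nat.one_le_pow m p (by omega)
    zify [hp1.le, this] at hσ
    exact hσ
  have hpm : (p : ℤ) ^ m = p * p ^ (m - 1) := by rw [← pow_succ']; congr 1; omega
  apply mul_left_cancel₀ (sub_ne_zero.2 (by exact_mod_cast hp1.ne') : (p : ℤ) - 1 ≠ 0)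
  rw [sub_one_mul_pcorr_ntuInterleave_eq_ite hp2 hm hcard hω hσ hcond]
  split_ifs
  · rw [hN1]
    push_cast
    linear_combination 2 * hσz + sub_one_mul_two_mul_ediv_sub_one (p : ℤ) (m - 1) + 2 * hpm
  · rw [hN2]
    linear_combination 2 * sub_one_mul_two_mul_ediv_sub_one (p : ℤ) (m - 2)

theorem stmt8 (p m : ℕ) [Fact p.Prime] (hp2 : p ≠ 2) (hm : 1 < m)
    (F : Type) [Field F] [Fintype F] [Algebra (ZMod p) F]
    (hcard : Fintype.card F = p ^ m) (ω : F) (hω : orderOf ω = p ^ m - 1)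
    (N : ℕ) (hN : N = 2 * (p ^ m - 1) / (p - 1)) (N1 N2 : ℤ)
    (hN1 : N1 = -2 * (p : ℤ) ^ (m - 1) + 2 * ((p : ℤ) ^ (m - 1) - 1) / ((p : ℤ) - 1))
    (hN2 : N2 = 2 * ((p : ℤ) ^ (m - 2) - 1) / ((p : ℤ) - 1))
    (e : ℕ) (he : e < N) (hcond : 2 * (e : ℤ) ≡ 1 - ((N / 2 : ℕ) : ℤ) [ZMOD (N : ℤ)])
    (τ0 : ℤ) (hτ0 : 0 ≤ τ0) (hτ1 : τ0 ≤ (N : ℤ) - 1) :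
    pcorr (2 * N) (ntuInterleave (ntuT1 p ω) (ntuT2 p ω) e) (ntuInterleave (ntuT1 p ω) (ntuT2 p ω) e) (2 * τ0 + 1) =
      if τ0 ≡ -(e : ℤ) [ZMOD (N : ℤ)] ∨ τ0 ≡ (e : ℤ) - 1 [ZMOD (N : ℤ)] then
        -(N : ℤ) - N1
      else -2 * N2 :=
  stmt8_general p m hp2 hm F hcard ω hω N hN N1 N2 hN1 hN2 e hcond τ0
end
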